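/- A cuspidal plane cubic over ℂ is homeomorphic (in the Euclidean topology) to the projective line P¹(ℂ), i.e., to the 2-sphere, yet it is not isomorphic to P¹ as an algebraic variety (it is singular). Hence the degree of the conormal variety (−3 vs −2) is not a topological invariant. -/

import Mathlib

/-! The map `[s : t] ↦ [s t² : t³ : s³]` is a continuous bijection from `P¹` onto the cusp
`y² z = x³`: on the curve, `[x : y : z]` with `y ≠ 0` comes from `[x : y]`, and `y = 0` forces
the single point `[0 : 0 : 1]`, the image of `[1 : 0]`. As `P¹` is compact and `P²` Hausdorff
(the relation "proportional" is closed and the quotient map by `ℂˣ` is open), it is a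
homeomorphism. The gradient `(-3x², 2yz, y²)` of `y² z - x³` vanishes at `[0 : 0 : 1]`. -/

open Projectivization

/-- The Euclidean (quotient) topology on the complex projective space
`P(V) = (V ∖ {0}) / ℂ*`, as a quotient of the subspace `V ∖ {0}` of `V`. -/
noncomputable instance projectivizationTopology (V : Type*) [AddCommGroup V] [Module ℂ V]
    [TopologicalSpace V] : TopologicalSpace (Projectivization ℂ V) :=
  instTopologicalSpaceQuotient (s := projectivizationSetoid ℂ V)

/-- The homogeneous cubic `F(x, y, z) = y²z - x³` defining the cuspidal plane cubic. -/
noncomputable def cuspCubicF (v : Fin 3 → ℂ) : ℂ := v 1 ^ 2 * v 2 - v 0 ^ 3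

/-- The cuspidal cubic `C = {y²z = x³} ⊂ P²(ℂ)` as a subset of the complex projective
plane (with the Euclidean topology). Since `F` is homogeneous, the condition is
independent of the chosen representative. -/
noncomputable def cuspCubic : Set (Projectivization ℂ (Fin 3 → ℂ)) :=
  {p | cuspCubicF p.rep = 0}

open scoped LinearAlgebra.Projectivization

namespace Projectivization

theorem mk_eq_mk_iff_mul_eq_mul {K ι : Type*} [Field K] {v w : ι → K} (hv : v ≠ 0) (hw : w ≠ 0) :
    mk K v hv = mk K w hw ↔ ∀ i j, v i * w j = v j * w i := by
  rw [mk_eq_mk_iff']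
  constructor
  · rintro ⟨c, rfl⟩ i j
    simp only [Pi.smul_apply, smul_eq_mul]
    ring
  · intro h
    obtain ⟨j, hj⟩ := Function.ne_iff.1 hw
    refine ⟨v j / w j, funext fun i => ?_⟩
    simp only [Pi.smul_apply, smul_eq_mul, Pi.zero_apply] at hj ⊢
    field_simp
    linear_combination -h i j

theorem mk_eq_mk_iff_fin_two {K : Type*} [Field K] {v w : Fin 2 → K} (hv : v ≠ 0) (hw : w ≠ 0) :
    mk K v hv = mk K w hw ↔ v 0 * w 1 = v 1 * w 0 := by
  rw [mk_eq_mk_iff_mul_eq_mul]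
  refine ⟨fun h => h 0 1, fun h i j => ?_⟩
  fin_cases i <;> fin_cases j <;> simp [h]

theorem isOpenQuotientMap_mk' {V : Type*} [AddCommGroup V] [Module ℂ V] [TopologicalSpace V]
    [ContinuousConstSMul ℂ V] : IsOpenQuotientMap (mk' ℂ : {v : V // v ≠ 0} → ℙ ℂ V) := by
  refine ⟨Quotient.mk''_surjective, continuous_quotient_mk', fun U hU => ?_⟩
  have hsat : mk' ℂ ⁻¹' (mk' ℂ '' U) =
      ⋃ a : ℂˣ, (fun v : {v : V // v ≠ 0} => (⟨a • v.1, (smul_ne_zero_iff_ne a).2 v.2⟩ :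
        {v : V // v ≠ 0})) ⁻¹' U := by
    ext v
    simp only [Set.mem_preimage, Set.mem_image, Set.mem_iUnion, mk'_eq_mk, mk_eq_mk_iff]
    constructor
    · rintro ⟨u, hu, a, ha⟩
      exact ⟨a, by simpa [ha] using hu⟩
    · rintro ⟨a, ha⟩
      exact ⟨_, ha, a, rfl⟩
  have : IsOpen (mk' ℂ ⁻¹' (mk' ℂ '' U)) := hsat ▸ isOpen_iUnion fun a => hU.preimage (by fun_prop)
  exact isQuotientMap_quotient_mk'.isOpen_preimage.1 this

instance {ι : Type*} : T2Space (ℙ ℂ (ι → ℂ)) := by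
  rw [t2Space_iff_of_isOpenQuotientMap isOpenQuotientMap_mk']
  have hrel : {q : {v : ι → ℂ // v ≠ 0} × {v : ι → ℂ // v ≠ 0} | mk' ℂ q.1 = mk' ℂ q.2} =
      ⋂ i, ⋂ j, {q | q.1.1 i * q.2.1 j = q.1.1 j * q.2.1 i} := by
    ext q
    simp [mk_eq_mk_iff_mul_eq_mul]
  have hcoord (i : ι) : Continuous fun v : {v : ι → ℂ // v ≠ 0} => v.1 i :=
    (continuous_apply i).comp continuous_subtype_val
  rw [hrel]
  exact isClosed_iInter fun i => isClosed_iInter fun j => isClosed_eq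
    (((hcoord i).comp continuous_fst).mul ((hcoord j).comp continuous_snd))
    (((hcoord j).comp continuous_fst).mul ((hcoord i).comp continuous_snd))

instance {V : Type*} [NormedAddCommGroup V] [NormedSpace ℂ V] [ProperSpace V] :
    CompactSpace (ℙ ℂ V) := by
  have : CompactSpace (Metric.sphere (0 : V) 1) :=
    isCompact_iff_compactSpace.1 (isCompact_sphere 0 1)
  refine Function.Surjective.compactSpace (f := fun v : Metric.sphere (0 : V) 1 =>
    mk ℂ v.1 (ne_zero_of_mem_unit_sphere v))
    (isOpenQuotientMap_mk'.continuous.comp (by fun_prop)) ?_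
  intro x
  induction x using ind with | h v hv => ?_
  refine ⟨⟨(‖v‖⁻¹ : ℂ) • v, by simpa using norm_smul_inv_norm (𝕜 := ℂ) hv⟩, ?_⟩
  exact (mk_eq_mk_iff' ℂ _ _ _ _).2 ⟨(‖v‖⁻¹ : ℂ), rfl⟩

end Projectivization

open Function

theorem cuspCubicF_smul (c : ℂ) (v : Fin 3 → ℂ) : cuspCubicF (c • v) = c ^ 3 * cuspCubicF v := by
  simp only [cuspCubicF, Pi.smul_apply, smul_eq_mul]
  ring

theorem mk_mem_cuspCubic_iff {v : Fin 3 → ℂ} (hv : v ≠ 0) :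
    mk ℂ v hv ∈ cuspCubic ↔ cuspCubicF v = 0 := by
  obtain ⟨a, ha⟩ := exists_smul_eq_mk_rep ℂ v hv
  change cuspCubicF (mk ℂ v hv).rep = 0 ↔ _
  rw [← ha, Units.smul_def, cuspCubicF_smul, mul_eq_zero, or_iff_right (pow_ne_zero 3 a.ne_zero)]

open ContinuousLinearMap in
theorem hasFDerivAt_cuspCubicF (v : Fin 3 → ℂ) :
    HasFDerivAt cuspCubicF ((2 * v 1 * v 2) • proj (R := ℂ) (1 : Fin 3) +
      v 1 ^ 2 • proj (R := ℂ) (2 : Fin 3) - (3 * v 0 ^ 2) • proj (R := ℂ) (0 : Fin 3)) v := by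
  have hx := hasFDerivAt_apply (𝕜 := ℂ) (0 : Fin 3) v
  have hy := hasFDerivAt_apply (𝕜 := ℂ) (1 : Fin 3) v
  have hz := hasFDerivAt_apply (𝕜 := ℂ) (2 : Fin 3) v
  have H := ((hy.pow 2).mul hz).sub (hx.pow 3)
  refine H.congr_fderiv ?_
  ext w
  simp only [sub_apply, add_apply, smul_apply, proj_apply, nsmul_eq_mul, smul_eq_mul]
  ring

def cuspParam (v : Fin 2 → ℂ) : Fin 3 → ℂ := ![v 0 * v 1 ^ 2, v 1 ^ 3, v 0 ^ 3]

theorem cuspParam_ne_zero {v : Fin 2 → ℂ} (hv : v ≠ 0) : cuspParam v ≠ 0 := by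
  contrapose! hv
  have h0 : v 0 ^ 3 = 0 := congrFun hv 2
  have h1 : v 1 ^ 3 = 0 := congrFun hv 1
  ext i
  fin_cases i <;> simp_all

theorem cuspParam_smul (c : ℂ) (v : Fin 2 → ℂ) : cuspParam (c • v) = c ^ 3 • cuspParam v := by
  ext i
  fin_cases i <;> simp [cuspParam] <;> ring

theorem continuous_cuspParam : Continuous cuspParam := by
  unfold cuspParam
  fun_prop

noncomputable def cuspNormalization : ℙ ℂ (Fin 2 → ℂ) → ℙ ℂ (Fin 3 → ℂ) :=
  Projectivization.lift (fun v => mk ℂ (cuspParam v) (cuspParam_ne_zero v.2)) <| by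
    rintro ⟨-, hv⟩ ⟨w, hw⟩ t rfl
    exact (mk_eq_mk_iff' ℂ _ _ _ _).2 ⟨t ^ 3, (cuspParam_smul t w).symm⟩

@[simp]
theorem cuspNormalization_mk {v : Fin 2 → ℂ} (hv : v ≠ 0) :
    cuspNormalization (mk ℂ v hv) = mk ℂ (cuspParam v) (cuspParam_ne_zero hv) :=
  rfl

theorem continuous_cuspNormalization : Continuous cuspNormalization :=
  Continuous.quotient_lift (isOpenQuotientMap_mk'.continuous.comp
    ((continuous_cuspParam.comp continuous_subtype_val).subtype_mk _)) _

theorem cuspNormalization_injective : Injective cuspNormalization := by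
  intro x y hxy
  induction x using ind with | h v hv => ?_
  induction y using ind with | h w hw => ?_
  rw [cuspNormalization_mk, cuspNormalization_mk, mk_eq_mk_iff_mul_eq_mul] at hxy
  rw [mk_eq_mk_iff_fin_two]
  have h01 := hxy 0 1
  have h12 := hxy 1 2
  simp only [cuspParam, Matrix.cons_val] at h01 h12
  have hsq : (v 1 * w 1) ^ 2 * (v 0 * w 1 - v 1 * w 0) = 0 := by linear_combination h01
  have hcube : (v 1 * w 0) ^ 3 = (v 0 * w 1) ^ 3 := by linear_combination h12
  rcases eq_or_ne (v 1 * w 1) 0 with h | h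
  · have hprod : (v 0 * w 1) * (v 1 * w 0) = 0 := by linear_combination (v 0 * w 0) * h
    rcases mul_eq_zero.1 hprod with h' | h'
    · rw [h', zero_pow three_ne_zero, pow_eq_zero_iff three_ne_zero] at hcube
      rw [h', hcube]
    · rw [h', zero_pow three_ne_zero, eq_comm, pow_eq_zero_iff three_ne_zero] at hcube
      rw [h', hcube]
  · exact sub_eq_zero.1 ((mul_eq_zero.1 hsq).resolve_left (pow_ne_zero 2 h))

theorem cuspCubicF_cuspParam (v : Fin 2 → ℂ) : cuspCubicF (cuspParam v) = 0 := by
  simp only [cuspCubicF, cuspParam, Matrix.cons_val]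
  ring

theorem range_cuspNormalization : Set.range cuspNormalization = cuspCubic := by
  ext p
  constructor
  · rintro ⟨x, rfl⟩
    induction x using ind with | h v hv => ?_
    rw [cuspNormalization_mk, mk_mem_cuspCubic_iff]
    exact cuspCubicF_cuspParam v
  · induction p using ind with | h u hu => ?_
    rw [mk_mem_cuspCubic_iff]
    intro hF
    have hcurve : u 1 ^ 2 * u 2 = u 0 ^ 3 := sub_eq_zero.1 hF
    rcases ne_or_eq (u 1) 0 with h1 | h1
    · -- on the curve, `cuspParam ![x, y] = y² • ![x, y, z]`
      have hv : ![u 0, u 1] ≠ 0 := fun h => h1 (by simpa using congrFun h 1)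
      refine ⟨mk ℂ _ hv, (mk_eq_mk_iff' ℂ _ _ _ _).2 ⟨u 1 ^ 2, ?_⟩⟩
      ext i
      fin_cases i <;> simp [cuspParam, ← hcurve] <;> ring
    · have h0 : u 0 = 0 := by simpa [h1] using hcurve.symm
      have hv : ![(1 : ℂ), 0] ≠ 0 := fun h => one_ne_zero (α := ℂ) (by simpa using congrFun h 0)
      refine ⟨mk ℂ _ hv, ((mk_eq_mk_iff' ℂ _ _ _ _).2 ⟨u 2, ?_⟩).symm⟩
      ext i
      fin_cases i <;> simp [cuspParam, h0, h1]

noncomputable def cuspNormalizationHomeomorph : ℙ ℂ (Fin 2 → ℂ) ≃ₜ cuspCubic :=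
  (continuous_cuspNormalization.subtype_mk _ |>.homeoOfEquivCompactToT2
    (f := Equiv.ofInjective _ cuspNormalization_injective)).trans
    (Homeomorph.setCongr range_cuspNormalization)

/-- A cuspidal plane cubic over `ℂ` is homeomorphic, in the Euclidean topology, to the
projective line `P¹(ℂ)` (i.e. to the 2-sphere); yet it is not isomorphic to `P¹` as an
algebraic variety, since it is singular at `[0 : 0 : 1]`: the point lies on the curve and
the derivative of the defining equation vanishes there. Hence the degree of the conormal
variety (`-3` for the cuspidal cubic vs `-2` for a smooth rational curve) is not a
topological invariant. -/
theorem cuspidal_cubic_homeomorphic_to_P1_but_singular :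
    Nonempty (cuspCubic ≃ₜ Projectivization ℂ (Fin 2 → ℂ)) ∧
    (∀ h : (![0, 0, 1] : Fin 3 → ℂ) ≠ 0,
      Projectivization.mk ℂ (![0, 0, 1] : Fin 3 → ℂ) h ∈ cuspCubic) ∧
    fderiv ℂ cuspCubicF (![0, 0, 1] : Fin 3 → ℂ) = 0 := by
  refine ⟨⟨cuspNormalizationHomeomorph.symm⟩, fun h => ?_, ?_⟩
  · exact (mk_mem_cuspCubic_iff h).2 (by simp [cuspCubicF])
  · exact (hasFDerivAt_cuspCubicF _).fderiv.trans (by ext; simp)
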